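/- Let V be a real normed vector space, let θ_i ∈ V be the victim's local update, let δ > 0, and let θ_1, …, θ_{n−1} ∈ V (each distinct from θ_i) be the honest updates with clipped versions c_j = min(1, δ/‖θ_j − θ_i‖) • (θ_j − θ_i) + θ_i. Suppose the adversary sends θ_A = θ_i − Σ_{j=1}^{n−1} min(1, δ/‖θ_j − θ_i‖) • (θ_j − θ_i), and that ‖θ_A − θ_i‖ ≤ δ (so θ_A is itself not clipped). Then the SCC aggregation result, the average (1/n) • (θ_A + c_1 + ⋯ + c_{n−1}), equals θ_i; i.e., the victim's model is frozen at its own local update and no learning from the honest contributions occurs. -/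

import Mathlib

theorem sub_sum_add_sum_add_const {ι M : Type*} [Fintype ι] [AddCommGroup M] (x : M)
    (u : ι → M) : (x - ∑ j, u j) + ∑ j, (u j + x) = (Fintype.card ι + 1) • x := by
  rw [Finset.sum_add_distrib, Finset.sum_const, Finset.card_univ, succ_nsmul]
  abel

theorem scc_state_override_general {V : Type*} [NormedAddCommGroup V] [NormedSpace ℝ V]
    (n : ℕ) (hn : 1 ≤ n) (θi : V) (δ : ℝ)
    (θ : Fin (n - 1) → V)
    (c : Fin (n - 1) → V)
    (hc : ∀ j, c j = min 1 (δ / ‖θ j - θi‖) • (θ j - θi) + θi)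
    (θA : V)
    (hA : θA = θi - ∑ j, min 1 (δ / ‖θ j - θi‖) • (θ j - θi)) :
    (1 / (n : ℝ)) • (θA + ∑ j, c j) = θi := by
  have hsum : θA + ∑ j, c j = (n : ℝ) • θi := by
    simp_rw [hA, hc]
    rw [sub_sum_add_sum_add_const, Fintype.card_fin, Nat.sub_add_cancel hn,
      Nat.cast_smul_eq_nsmul]
  have hn0 : (n : ℝ) ≠ 0 := Nat.cast_ne_zero.mpr (by omega)
  rw [hsum, one_div, inv_smul_smul₀ hn0]

/-- Refined state-override attack against Self-Centered Clipping: if the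
adversary sends `θ_A = θᵢ - Σⱼ min(1, δ/‖θⱼ - θᵢ‖) • (θⱼ - θᵢ)`, and `θ_A`
itself passes the clipping test (`‖θ_A - θᵢ‖ ≤ δ`), then the SCC aggregation
result — the average of `θ_A` and the clipped honest updates `cⱼ` — equals the
victim's own local update `θᵢ`: no learning from the honest contributions occurs. -/
theorem scc_state_override {V : Type*} [NormedAddCommGroup V] [NormedSpace ℝ V]
    (n : ℕ) (hn : 1 ≤ n) (θi : V) (δ : ℝ) (hδ : 0 < δ)
    (θ : Fin (n - 1) → V) (hne : ∀ j, θ j ≠ θi)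
    (c : Fin (n - 1) → V)
    (hc : ∀ j, c j = min 1 (δ / ‖θ j - θi‖) • (θ j - θi) + θi)
    (θA : V)
    (hA : θA = θi - ∑ j, min 1 (δ / ‖θ j - θi‖) • (θ j - θi))
    (hApass : ‖θA - θi‖ ≤ δ) :
    (1 / (n : ℝ)) • (θA + ∑ j, c j) = θi :=
  scc_state_override_general n hn θi δ θ c hc θA hA
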